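/- arXiv:2407.10280 — 7 statements merged into one kernel-verified Lean document; each statement's English description precedes it below -/
import Mathlib

section
/- Let {(G_j, p_j)}_{j≥1} be a sequence of pointed domains in ℂ^n tamed at p̂. A pointed domain (Ĝ, p̂) is the normal limit of the sequence if and only if Ĝ equals the underlying set of the Carathéodory kernel Ker_{p̂}{(G_j, p_j)}_{j≥1}. -/
open Filter Topology Set

/-- A pointed domain: `G` is open, connected, and contains `p`. -/
def IsPointedDomain {E : Type*} [TopologicalSpace E] (G : Set E) (p : E) : Prop :=
  IsOpen G ∧ IsConnected G ∧ p ∈ G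

/-- A sequence of pointed sets `(G j, p j)` is tamed at `phat` if `p j → phat` and some
open neighborhood of `phat` is contained in `⋂_{j ≥ k} G j` for some `k`. -/
def TamedAt {E : Type*} [TopologicalSpace E] (G : ℕ → Set E) (p : ℕ → E) (phat : E) : Prop :=
  Filter.Tendsto p Filter.atTop (nhds phat) ∧
    ∃ k : ℕ, ∃ U : Set E, IsOpen U ∧ phat ∈ U ∧ U ⊆ ⋂ j, ⋂ (_ : k ≤ j), G j

/-- The underlying set of the Carathéodory kernel of a sequence of sets, at the point `phat`:
`⋃_{k} Conn_{phat} ((⋂_{j ≥ k} G j)°)`. -/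
def kernelSet {E : Type*} [TopologicalSpace E] (G : ℕ → Set E) (phat : E) : Set E :=
  ⋃ k : ℕ, connectedComponentIn (interior (⋂ j, ⋂ (_ : k ≤ j), G j)) phat

/-- `(Ghat, phat)` is a normal limit of the sequence `(G j, p j)` if (1) every connected
compact set `K ⊆ Ghat` with `phat ∈ K` is contained in `(⋂_{j ≥ k} G j)°` for some `k`, and
(2) every compact connected set `L` containing `phat` with `L ⊆ (⋂_{j ≥ k} G j)°` for some
`k` satisfies `L ⊆ Ghat`. -/
def IsNormalLimit {E : Type*} [TopologicalSpace E] (G : ℕ → Set E) (Ghat : Set E)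
    (phat : E) : Prop :=
  (∀ K : Set E, IsCompact K → IsConnected K → phat ∈ K → K ⊆ Ghat →
      ∃ k : ℕ, K ⊆ interior (⋂ j, ⋂ (_ : k ≤ j), G j)) ∧
  (∀ L : Set E, IsCompact L → IsConnected L → phat ∈ L →
      (∃ k : ℕ, L ⊆ interior (⋂ j, ⋂ (_ : k ≤ j), G j)) → L ⊆ Ghat)

/-- A pointed domain `(Ghat, phat)` is the normal limit of a tamed sequence of pointed
domains if and only if `Ghat` equals the underlying set of the Carathéodory kernel. -/
theorem isNormalLimit_iff_eq_kernelSet {n : ℕ} (G : ℕ → Set (Fin n → ℂ))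
    (p : ℕ → Fin n → ℂ) (phat : Fin n → ℂ)
    (hdom : ∀ j, IsPointedDomain (G j) (p j))
    (htame : TamedAt G p phat)
    (Ghat : Set (Fin n → ℂ)) (hGhat : IsPointedDomain Ghat phat) :
    IsNormalLimit G Ghat phat ↔ Ghat = kernelSet G phat := by

  -- notation
  set I : ℕ → Set (Fin n → ℂ) := fun k => interior (⋂ j, ⋂ (_ : k ≤ j), G j) with hI
  have hIopen : ∀ k, IsOpen (I k) := fun k => isOpen_interior
  have hImono : Monotone I := by
    intro k m hkm
    apply interior_mono
    intro x hx
    simp only [mem_iInter] at hx ⊢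
    exact fun j hj => hx j (hkm.trans hj)
  have hCopen : ∀ k, IsOpen (connectedComponentIn (I k) phat) :=
    fun k => (hIopen k).connectedComponentIn
  have hCmono : Monotone (fun k => connectedComponentIn (I k) phat) :=
    fun k m hkm => connectedComponentIn_mono _ (hImono hkm)
  constructor
  · rintro ⟨h1, h2⟩
    apply Subset.antisymm
    · -- Ghat ⊆ kernelSet
      intro x hx
      have hpc : IsPathConnected Ghat :=
        (hGhat.1.isConnected_iff_isPathConnected).mp hGhat.2.1
      obtain ⟨γ, hγ⟩ := hpc.joinedIn phat hGhat.2.2 x hx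
      set K := range γ with hK
      have hKc : IsCompact K := isCompact_range γ.continuous
      have hKconn : IsConnected K := isConnected_range γ.continuous
      have hpK : phat ∈ K := ⟨0, γ.source⟩
      have hxK : x ∈ K := ⟨1, γ.target⟩
      have hKG : K ⊆ Ghat := by rintro y ⟨t, rfl⟩; exact hγ t
      obtain ⟨k, hk⟩ := h1 K hKc hKconn hpK hKG
      have : K ⊆ connectedComponentIn (I k) phat :=
        hKconn.isPreconnected.subset_connectedComponentIn hpK hk
      exact mem_iUnion.mpr ⟨k, this hxK⟩
    · -- kernelSet ⊆ Ghat
      intro x hx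
      obtain ⟨k, hk⟩ := mem_iUnion.mp hx
      have hpI : phat ∈ I k := by
        rw [← connectedComponentIn_nonempty_iff]
        exact ⟨x, hk⟩
      have hpC : phat ∈ connectedComponentIn (I k) phat := mem_connectedComponentIn hpI
      have hCconn : IsConnected (connectedComponentIn (I k) phat) :=
        ⟨⟨phat, hpC⟩, isPreconnected_connectedComponentIn⟩
      have hpcC : IsPathConnected (connectedComponentIn (I k) phat) :=
        ((hCopen k).isConnected_iff_isPathConnected).mp hCconn
      obtain ⟨γ, hγ⟩ := hpcC.joinedIn phat hpC x hk
      set L := range γ with hL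
      have hLsub : L ⊆ connectedComponentIn (I k) phat := by
        rintro y ⟨t, rfl⟩; exact hγ t
      refine h2 L (isCompact_range γ.continuous) (isConnected_range γ.continuous)
        ⟨0, γ.source⟩ ⟨k, hLsub.trans (connectedComponentIn_subset _ _)⟩ ?_
      exact ⟨1, γ.target⟩
  · rintro rfl
    constructor
    · intro K hKc hKconn hpK hKsub
      have hcov : K ⊆ ⋃ k, connectedComponentIn (I k) phat := hKsub
      have hdir : Directed (· ⊆ ·) (fun k => connectedComponentIn (I k) phat) :=
        hCmono.directed_le
      obtain ⟨k, hk⟩ := hKc.elim_directed_cover _ hCopen hcov hdir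
      exact ⟨k, hk.trans (connectedComponentIn_subset _ _)⟩
    · rintro L hLc hLconn hpL ⟨k, hLk⟩
      have : L ⊆ connectedComponentIn (I k) phat :=
        hLconn.isPreconnected.subset_connectedComponentIn hpL hLk
      exact this.trans (subset_iUnion (fun k => connectedComponentIn (I k) phat) k)
end

section
/- Let σ = {(G_j, p_j)}_{j≥1} be a sequence of pointed domains in ℂ^n tamed at p̂. Then there exists a subsequence τ of σ that converges to its own Carathéodory kernel Ker_{p̂}(τ); that is, every subsequence of τ has the same Carathéodory kernel as τ. -/
open Filter Topology Set

section Aux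

variable {E : Type*} [TopologicalSpace E]

/-- Kernels only grow when passing to a subsequence. -/
lemma kernel_mono (G : ℕ → Set E) (phat : E) {ψ : ℕ → ℕ} (hψ : StrictMono ψ) :
    kernelSet G phat ⊆ kernelSet (G ∘ ψ) phat := by
  refine Set.iUnion_subset fun k => Set.subset_iUnion_of_subset k ?_
  refine connectedComponentIn_mono _ (interior_mono ?_)
  intro x hx
  simp only [Set.mem_iInter, Function.comp_apply] at hx ⊢
  exact fun j hj => hx (ψ j) (le_trans hj hψ.le_apply)

/-- Kernels are invariant under shifting the sequence. -/
lemma kernel_shift (G : ℕ → Set E) (phat : E) (m : ℕ) :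
    kernelSet (G ∘ (· + m)) phat = kernelSet G phat := by
  apply subset_antisymm
  · refine Set.iUnion_subset fun k => Set.subset_iUnion_of_subset (k + m) ?_
    refine connectedComponentIn_mono _ (interior_mono ?_)
    intro x hx
    simp only [Set.mem_iInter, Function.comp_apply] at hx ⊢
    intro j hj
    have h := hx (j - m) (by omega)
    rwa [Nat.sub_add_cancel (by omega : m ≤ j)] at h
  · exact kernel_mono G phat (fun a b h => by simpa using h)

lemma kernel_open [LocallyConnectedSpace E] (G : ℕ → Set E) (phat : E) :
    IsOpen (kernelSet G phat) :=
  isOpen_iUnion fun _ => isOpen_interior.connectedComponentIn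

open Classical in
/-- If some subsequence of `H` has kernel containing `B`, pick one; otherwise `id`. -/
noncomputable def nextStep (B : Set E) (H : ℕ → Set E) (phat : E) : ℕ → ℕ :=
  if h : ∃ θ : ℕ → ℕ, StrictMono θ ∧ B ⊆ kernelSet (H ∘ θ) phat then h.choose else id

lemma nextStep_strictMono (B : Set E) (H : ℕ → Set E) (phat : E) :
    StrictMono (nextStep B H phat) := by
  unfold nextStep
  split
  · next h => exact h.choose_spec.1
  · exact strictMono_id

lemma nextStep_spec {B : Set E} {H : ℕ → Set E} {phat : E}
    (h : ∃ θ : ℕ → ℕ, StrictMono θ ∧ B ⊆ kernelSet (H ∘ θ) phat) :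
    B ⊆ kernelSet (H ∘ nextStep B H phat) phat := by
  unfold nextStep
  rw [dif_pos h]
  exact h.choose_spec.2

/-- The chain of composed subsequence selections. -/
noncomputable def chain (b : ℕ → Set E) (G : ℕ → Set E) (phat : E) : ℕ → ℕ → ℕ
  | 0 => id
  | i + 1 => chain b G phat i ∘ nextStep (b i) (G ∘ chain b G phat i) phat

lemma chain_strictMono (b : ℕ → Set E) (G : ℕ → Set E) (phat : E) :
    ∀ i, StrictMono (chain b G phat i)
  | 0 => strictMono_id
  | i + 1 => (chain_strictMono b G phat i).comp (nextStep_strictMono _ _ _)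

/-- `mid b G phat i k` is the composition of the selection maps from stage `i` to stage `k`. -/
noncomputable def mid (b : ℕ → Set E) (G : ℕ → Set E) (phat : E) (i : ℕ) : ℕ → ℕ → ℕ
  | 0 => id
  | k + 1 => mid b G phat i k ∘
      (if i ≤ k then nextStep (b k) (G ∘ chain b G phat k) phat else id)

lemma mid_strictMono (b : ℕ → Set E) (G : ℕ → Set E) (phat : E) (i : ℕ) :
    ∀ k, StrictMono (mid b G phat i k)
  | 0 => strictMono_id
  | k + 1 => by
    refine (mid_strictMono b G phat i k).comp ?_
    split
    · exact nextStep_strictMono _ _ _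
    · exact strictMono_id

lemma mid_id (b : ℕ → Set E) (G : ℕ → Set E) (phat : E) (i : ℕ) :
    ∀ k, k ≤ i → mid b G phat i k = id
  | 0, _ => rfl
  | k + 1, hk => by
    have h1 : ¬ i ≤ k := by omega
    show mid b G phat i k ∘ _ = id
    rw [if_neg h1, mid_id b G phat i k (by omega)]
    rfl

lemma chain_factor (b : ℕ → Set E) (G : ℕ → Set E) (phat : E) (i : ℕ) :
    ∀ k, i ≤ k → chain b G phat k = chain b G phat i ∘ mid b G phat i k := by
  intro k
  induction k with
  | zero =>
    intro hk
    have : i = 0 := by omega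
    subst this
    rfl
  | succ k ih =>
    intro hk
    rcases Nat.lt_or_ge i (k + 1) with h | h
    · have hik : i ≤ k := by omega
      funext x
      have hm : mid b G phat i (k + 1) x =
          mid b G phat i k (nextStep (b k) (G ∘ chain b G phat k) phat x) := by
        show (mid b G phat i k ∘ if i ≤ k then _ else id) x = _
        rw [if_pos hik]
        rfl
      show chain b G phat k (nextStep (b k) (G ∘ chain b G phat k) phat x) =
        chain b G phat i (mid b G phat i (k + 1) x)
      rw [hm, ih hik]
      rfl
    · have : i = k + 1 := by omega
      subst this
      rw [mid_id b G phat (k+1) (k+1) le_rfl]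
      rfl

/-- The diagonal map through stage `i` is strictly monotone. -/
lemma diag_strictMono (b : ℕ → Set E) (G : ℕ → Set E) (phat : E) (i : ℕ) :
    StrictMono (fun k => mid b G phat i k k) := by
  apply strictMono_nat_of_lt_succ
  intro k
  have hstep : ∀ s : ℕ → ℕ, StrictMono s → mid b G phat i k k < mid b G phat i k (s (k + 1)) :=
    fun s hs => (mid_strictMono b G phat i k) (lt_of_lt_of_le (Nat.lt_succ_self k) hs.le_apply)
  show mid b G phat i (k + 1) (k + 1) > _
  show (mid b G phat i k ∘ _) (k + 1) > _
  split
  · exact hstep _ (nextStep_strictMono _ _ _)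
  · exact hstep _ strictMono_id

end Aux

/-- Selection theorem for domains: every sequence of pointed domains tamed at `phat`
admits a subsequence `τ` (given by the strictly increasing reindexing `φ`) that converges
to its own Carathéodory kernel, i.e. every subsequence of `τ` has the same kernel as `τ`. -/
theorem selection_theorem {n : ℕ} (G : ℕ → Set (Fin n → ℂ)) (p : ℕ → Fin n → ℂ)
    (phat : Fin n → ℂ)
    (hdom : ∀ j, IsPointedDomain (G j) (p j))
    (htame : TamedAt G p phat) :
    ∃ φ : ℕ → ℕ, StrictMono φ ∧
      ∀ ψ : ℕ → ℕ, StrictMono ψ →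
        kernelSet (G ∘ φ ∘ ψ) phat = kernelSet (G ∘ φ) phat := by
  classical
  obtain ⟨B, hBc, -, hB⟩ := TopologicalSpace.exists_countable_basis (Fin n → ℂ)
  obtain ⟨V, hVB, -, -⟩ := hB.exists_subset_of_mem_open (Set.mem_univ phat) isOpen_univ
  obtain ⟨b, rfl⟩ := hBc.exists_eq_range ⟨V, hVB⟩
  set φ : ℕ → ℕ := fun k => chain b G phat k k with hφdef
  have haddm : ∀ m : ℕ, StrictMono (fun k : ℕ => k + m) := fun m a c h => by
    dsimp only
    omega
  -- factorization of the diagonal through any stage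
  have hfact : ∀ i k, i ≤ k → φ k = chain b G phat i (mid b G phat i k k) := by
    intro i k hik
    show chain b G phat k k = _
    rw [chain_factor b G phat i k hik]
    rfl
  have hφmono : StrictMono φ := by
    have : φ = fun k => mid b G phat 0 k k := by
      funext k
      rw [hfact 0 k (Nat.zero_le k)]
      rfl
    rw [this]
    exact diag_strictMono b G phat 0
  -- the kernel of the diagonal contains the kernel of every stage
  have hstar : ∀ i, kernelSet (G ∘ chain b G phat i) phat ⊆ kernelSet (G ∘ φ) phat := by
    intro i
    have hσ : StrictMono (fun k => mid b G phat i (k + i) (k + i)) :=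
      (diag_strictMono b G phat i).comp (haddm i)
    have hcomp : (G ∘ φ) ∘ (· + i) =
        (G ∘ chain b G phat i) ∘ (fun k => mid b G phat i (k + i) (k + i)) := by
      funext k
      show G (φ (k + i)) = _
      rw [hfact i (k + i) (by omega)]
      rfl
    calc kernelSet (G ∘ chain b G phat i) phat
        ⊆ kernelSet ((G ∘ chain b G phat i) ∘ (fun k => mid b G phat i (k + i) (k + i))) phat :=
          kernel_mono _ _ hσ
      _ = kernelSet ((G ∘ φ) ∘ (· + i)) phat := by rw [hcomp]
      _ = kernelSet (G ∘ φ) phat := kernel_shift (G ∘ φ) phat i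
  refine ⟨φ, hφmono, ?_⟩
  intro ψ hψ
  apply subset_antisymm
  · -- hard direction
    intro x hx
    obtain ⟨V, hVB, hxV, hVsub⟩ :=
      hB.exists_subset_of_mem_open hx (kernel_open (G ∘ φ ∘ ψ) phat)
    obtain ⟨i, rfl⟩ := hVB
    -- the witness subsequence of stage `i`
    set θ : ℕ → ℕ := fun k => mid b G phat i (ψ (k + i)) (ψ (k + i)) with hθdef
    have hθmono : StrictMono θ :=
      (diag_strictMono b G phat i).comp (hψ.comp (haddm i))
    have hcomp : (G ∘ φ ∘ ψ) ∘ (· + i) = (G ∘ chain b G phat i) ∘ θ := by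
      funext k
      show G (φ (ψ (k + i))) = _
      rw [hfact i (ψ (k + i)) (le_trans (by omega) hψ.le_apply)]
      rfl
    have hker : kernelSet (G ∘ φ ∘ ψ) phat = kernelSet ((G ∘ chain b G phat i) ∘ θ) phat := by
      rw [← hcomp, kernel_shift]
    have hex : ∃ θ' : ℕ → ℕ, StrictMono θ' ∧
        b i ⊆ kernelSet ((G ∘ chain b G phat i) ∘ θ') phat :=
      ⟨θ, hθmono, hker ▸ hVsub⟩
    have hnext := nextStep_spec hex
    have hchain : (G ∘ chain b G phat i) ∘ nextStep (b i) (G ∘ chain b G phat i) phat =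
        G ∘ chain b G phat (i + 1) := rfl
    rw [hchain] at hnext
    exact hstar (i + 1) (hnext hxV)
  · exact kernel_mono (G ∘ φ) phat hψ
end

section
/- For each j ≥ 1 let φ_j : ℝ × ℂ^{n-1} → ℝ be a C¹-smooth function with φ_j(0, 0) = 0, and set G_j := {(z₁, z') ∈ ℂ × ℂ^{n-1} : Re(z₁) > φ_j(Im(z₁), z')}. Let 𝟏 := (1, 0, …, 0). Assume the sequence {φ_j}_{j≥1} converges uniformly on compact subsets of ℝ × ℂ^{n-1} to a function φ̂ : ℝ × ℂ^{n-1} → ℝ. Then the sequence of pointed domains {(G_j, 𝟏)}_{j≥1} is tamed at 𝟏 and converges in the sense of Carathéodory to the pointed domain (Ĝ, 𝟏), where Ĝ := {(z₁, z') ∈ ℂ × ℂ^{n-1} : Re(z₁) > φ̂(Im(z₁), z')}; in particular, the Carathéodory kernel of every subsequence equals (Ĝ, 𝟏). -/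
/-
In the coordinates `((Im z₁, z'), Re z₁)` the domains `G j` and `Ghat` are the strict epigraphs
of `φ j` and `φhat` over `Y = ℝ × ℂ^{n-1}`. A point `(y, t)` of the interior of
`⋂_{j ≥ k} G j` stays there after lowering `t` a little, so `φhat y < t` in the limit.
Conversely, given `(y, t)` with `φhat y < t`, the set `{(y', t') : ‖y'‖ < R, φhat y' + ε < t'}` is the image of the connected set
`ball 0 R × (ε, ∞)` under a shear; for suitable `ε`, `R` it contains the base point and `(y, t)`,
and by uniform convergence on `closedBall 0 R` it lies in `G j` for all large `j`.
-/

open Filter Topology Set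

section Transfer

variable {X Z : Type*} [TopologicalSpace X] [TopologicalSpace Z] (e : X ≃ₜ Z)

theorem Homeomorph.preimage_connectedComponentIn (S : Set Z) (x : X) :
    e ⁻¹' connectedComponentIn S (e x) = connectedComponentIn (e ⁻¹' S) x := by
  by_cases hx : e x ∈ S
  · rw [← e.image_symm, e.symm.image_connectedComponentIn hx, e.image_symm, e.symm_apply_apply]
  · rw [connectedComponentIn_eq_empty hx, connectedComponentIn_eq_empty (show x ∉ e ⁻¹' S from hx),
      preimage_empty]

theorem Homeomorph.kernelSet_preimage (G : ℕ → Set Z) (p : X) :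
    kernelSet (fun j => e ⁻¹' G j) p = e ⁻¹' kernelSet G (e p) := by
  simp only [kernelSet, preimage_iUnion, e.preimage_connectedComponentIn, e.preimage_interior,
    preimage_iInter]

theorem Homeomorph.tamedAt_preimage {G : ℕ → Set Z} {p : ℕ → X} {phat : X}
    (h : TamedAt G (e ∘ p) (e phat)) : TamedAt (fun j => e ⁻¹' G j) p phat := by
  obtain ⟨hlim, k, U, hU, hphat, hUG⟩ := h
  refine ⟨e.isInducing.tendsto_nhds_iff.mpr hlim, k, e ⁻¹' U, hU.preimage e.continuous, hphat, ?_⟩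
  simpa only [preimage_iInter] using preimage_mono hUG

theorem Homeomorph.isPointedDomain_preimage {G : Set Z} {p : X} :
    IsPointedDomain (e ⁻¹' G) p ↔ IsPointedDomain G (e p) := by
  simp only [IsPointedDomain, e.isOpen_preimage, e.isConnected_preimage, mem_preimage]

end Transfer

section StrictEpigraph

variable {Y : Type*}

def strictEpigraph (f : Y → ℝ) : Set (Y × ℝ) := {q | f q.1 < q.2}

theorem eventually_subset_strictEpigraph {φ : ℕ → Y → ℝ} {φhat : Y → ℝ} {K : Set Y}
    (hconv : TendstoUniformlyOn φ φhat atTop K) {ε : ℝ} (hε : 0 < ε) :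
    ∀ᶠ j in atTop, {q : Y × ℝ | q.1 ∈ K ∧ φhat q.1 + ε < q.2} ⊆ strictEpigraph (φ j) := by
  filter_upwards [Metric.tendstoUniformlyOn_iff.mp hconv ε hε] with j hj
  rintro ⟨y, t⟩ ⟨hy, ht⟩
  have hdist := hj y hy
  rw [Real.dist_eq, abs_lt] at hdist
  dsimp only at ht
  show φ j y < t
  linarith [hdist.1]

variable [TopologicalSpace Y]

theorem interior_biInter_strictEpigraph_subset {φ : ℕ → Y → ℝ} {φhat : Y → ℝ}
    (hφ : ∀ y, Tendsto (φ · y) atTop (𝓝 (φhat y))) (k : ℕ) :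
    interior (⋂ j, ⋂ (_ : k ≤ j), strictEpigraph (φ j)) ⊆ strictEpigraph φhat := by
  rintro ⟨y, t⟩ hyt
  have hnhds : ∀ᶠ s in 𝓝 t, (y, s) ∈ interior (⋂ j, ⋂ (_ : k ≤ j), strictEpigraph (φ j)) :=
    (Continuous.prodMk_right y).continuousAt.preimage_mem_nhds (isOpen_interior.mem_nhds hyt)
  obtain ⟨s, hst, hs⟩ := hnhds.exists_lt
  have hle : φhat y ≤ s := le_of_tendsto (hφ y) <| (eventually_ge_atTop k).mono fun j hj =>
    (mem_iInter₂.mp (interior_subset hs) j hj).le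
  exact hle.trans_lt hst

theorem isOpen_strictEpigraph {f : Y → ℝ} (hf : Continuous f) : IsOpen (strictEpigraph f) :=
  isOpen_lt (hf.comp continuous_fst) continuous_snd

def graphShear (f : Y → ℝ) (hf : Continuous f) : Y × ℝ ≃ₜ Y × ℝ where
  toFun q := (q.1, q.2 - f q.1)
  invFun q := (q.1, q.2 + f q.1)
  left_inv q := by simp
  right_inv q := by simp
  continuous_toFun := by fun_prop
  continuous_invFun := by fun_prop

theorem graphShear_preimage_prod_Ioi {f : Y → ℝ} (hf : Continuous f) (U : Set Y) (ε : ℝ) :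
    graphShear f hf ⁻¹' (U ×ˢ Ioi ε) = {q | q.1 ∈ U ∧ f q.1 + ε < q.2} := by
  ext q
  simp [graphShear, lt_sub_iff_add_lt']

theorem isPointedDomain_strictEpigraph [ConnectedSpace Y] {f : Y → ℝ} (hf : Continuous f)
    {p : Y × ℝ} (hp : p ∈ strictEpigraph f) : IsPointedDomain (strictEpigraph f) p := by
  have hshear : strictEpigraph f = graphShear f hf ⁻¹' (univ ×ˢ Ioi 0) := by
    simp [graphShear_preimage_prod_Ioi, strictEpigraph]
  refine ⟨isOpen_strictEpigraph hf, ?_, hp⟩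
  rw [hshear, (graphShear f hf).isConnected_preimage]
  exact isConnected_univ.prod isConnected_Ioi

end StrictEpigraph

section NormedSpace

variable {Y : Type*} [NormedAddCommGroup Y] [NormedSpace ℝ Y] [ProperSpace Y]
  {φ : ℕ → Y → ℝ} {φhat : Y → ℝ}

theorem exists_isPreconnected_subset_biInter_strictEpigraph (hφhat : Continuous φhat)
    (hconv : ∀ K : Set Y, IsCompact K → TendstoUniformlyOn φ φhat atTop K)
    {p q : Y × ℝ} (hp : p ∈ strictEpigraph φhat) (hq : q ∈ strictEpigraph φhat) :
    ∃ k, ∃ T, IsOpen T ∧ IsPreconnected T ∧ p ∈ T ∧ q ∈ T ∧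
      T ⊆ ⋂ j, ⋂ (_ : k ≤ j), strictEpigraph (φ j) := by
  obtain ⟨ε, hε, hpε, hqε⟩ : ∃ ε > 0, φhat p.1 + ε < p.2 ∧ φhat q.1 + ε < q.2 := by
    have hgap : 0 < min (p.2 - φhat p.1) (q.2 - φhat q.1) :=
      lt_min (sub_pos.mpr hp) (sub_pos.mpr hq)
    refine ⟨min (p.2 - φhat p.1) (q.2 - φhat q.1) / 2, half_pos hgap, ?_, ?_⟩
    · linarith [min_le_left (p.2 - φhat p.1) (q.2 - φhat q.1)]
    · linarith [min_le_right (p.2 - φhat p.1) (q.2 - φhat q.1)]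
  set R := max ‖p.1‖ ‖q.1‖ + 1
  obtain ⟨k, hk⟩ := eventually_atTop.mp
    (eventually_subset_strictEpigraph (hconv _ (isCompact_closedBall (0 : Y) R)) hε)
  have hT := graphShear_preimage_prod_Ioi hφhat (Metric.ball 0 R) ε
  refine ⟨k, graphShear φhat hφhat ⁻¹' (Metric.ball 0 R ×ˢ Ioi ε),
    (Metric.isOpen_ball.prod isOpen_Ioi).preimage (graphShear φhat hφhat).continuous,
    (graphShear φhat hφhat).isPreconnected_preimage.mpr
      ((convex_ball 0 R).isPreconnected.prod isPreconnected_Ioi), ?_, ?_, ?_⟩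
  · rw [hT]
    exact ⟨mem_ball_zero_iff.mpr (by linarith [le_max_left ‖p.1‖ ‖q.1‖]), hpε⟩
  · rw [hT]
    exact ⟨mem_ball_zero_iff.mpr (by linarith [le_max_right ‖p.1‖ ‖q.1‖]), hqε⟩
  · rw [hT]
    exact fun w hw => mem_iInter₂.mpr fun j hj =>
      hk j hj ⟨Metric.ball_subset_closedBall hw.1, hw.2⟩

theorem tamedAt_strictEpigraph (hφhat : Continuous φhat)
    (hconv : ∀ K : Set Y, IsCompact K → TendstoUniformlyOn φ φhat atTop K)
    {p : Y × ℝ} (hp : p ∈ strictEpigraph φhat) :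
    TamedAt (fun j => strictEpigraph (φ j)) (fun _ => p) p := by
  obtain ⟨k, T, hTopen, -, hpT, -, hTsub⟩ :=
    exists_isPreconnected_subset_biInter_strictEpigraph hφhat hconv hp hp
  exact ⟨tendsto_const_nhds, k, T, hTopen, hpT, hTsub⟩

theorem kernelSet_strictEpigraph (hφhat : Continuous φhat)
    (hconv : ∀ K : Set Y, IsCompact K → TendstoUniformlyOn φ φhat atTop K)
    {p : Y × ℝ} (hp : p ∈ strictEpigraph φhat) :
    kernelSet (fun j => strictEpigraph (φ j)) p = strictEpigraph φhat := by
  have hpt (y : Y) : Tendsto (φ · y) atTop (𝓝 (φhat y)) :=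
    (hconv {y} isCompact_singleton).tendsto_at rfl
  refine subset_antisymm (iUnion_subset fun k => (connectedComponentIn_subset _ _).trans
    (interior_biInter_strictEpigraph_subset hpt k)) fun q hq => ?_
  obtain ⟨k, T, hTopen, hTconn, hpT, hqT, hTsub⟩ :=
    exists_isPreconnected_subset_biInter_strictEpigraph hφhat hconv hp hq
  exact mem_iUnion.mpr
    ⟨k, hTconn.subset_connectedComponentIn hpT (interior_maximal hTsub hTopen) hqT⟩

end NormedSpace

/-- Coordinates in which `{z | φ (Im z.1, z.2) < Re z.1}` is the strict epigraph of `φ`. -/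
def graphCoords (E : Type*) [TopologicalSpace E] : ℂ × E ≃ₜ (ℝ × E) × ℝ where
  toFun z := ((z.1.im, z.2), z.1.re)
  invFun q := (q.2 + q.1.1 * Complex.I, q.1.2)
  left_inv z := by simp [Complex.re_add_im]
  right_inv q := by simp
  continuous_toFun := by fun_prop
  continuous_invFun := by fun_prop

/-- Let `G j := {Re z₁ > φ j (Im z₁, z')}` for `C¹`-smooth functions `φ j` with
`φ j (0,0) = 0`, converging uniformly on compact subsets of `ℝ × ℂ^{n-1}` to `φhat`.
Then the pointed domains `(G j, 𝟏)` are tamed at `𝟏 = (1,0,…,0)` and converge in the sense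
of Carathéodory to the pointed domain `(Ghat, 𝟏)` where `Ghat := {Re z₁ > φhat (Im z₁, z')}`:
the Carathéodory kernel of every subsequence equals `(Ghat, 𝟏)`. -/
theorem kernel_of_graph_domains {m : ℕ}
    (φ : ℕ → (ℝ × (Fin m → ℂ)) → ℝ)
    (hsmooth : ∀ j, ContDiff ℝ 1 (φ j))
    (hzero : ∀ j, φ j (0, 0) = 0)
    (φhat : (ℝ × (Fin m → ℂ)) → ℝ)
    (hconv : ∀ K : Set (ℝ × (Fin m → ℂ)), IsCompact K →
      TendstoUniformlyOn (fun j => φ j) φhat Filter.atTop K)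
    (G : ℕ → Set (ℂ × (Fin m → ℂ)))
    (hG : ∀ j, G j = {z : ℂ × (Fin m → ℂ) | φ j (z.1.im, z.2) < z.1.re})
    (Ghat : Set (ℂ × (Fin m → ℂ)))
    (hGhat : Ghat = {z : ℂ × (Fin m → ℂ) | φhat (z.1.im, z.2) < z.1.re})
    (one : ℂ × (Fin m → ℂ)) (hone : one = ((1 : ℂ), 0)) :
    TamedAt G (fun _ => one) one ∧ IsPointedDomain Ghat one ∧
      ∀ ψ : ℕ → ℕ, StrictMono ψ → kernelSet (G ∘ ψ) one = Ghat := by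
  have hφhat : Continuous φhat :=
    (tendstoLocallyUniformly_iff_forall_isCompact.mpr hconv).continuous
      (.of_forall fun j => (hsmooth j).continuous)
  have hφhat_zero : φhat (0, 0) = 0 :=
    tendsto_nhds_unique ((hconv _ isCompact_singleton).tendsto_at rfl) (by simp [hzero])
  set e := graphCoords (Fin m → ℂ)
  have hG_eq : G = fun j => e ⁻¹' strictEpigraph (φ j) := funext fun j => by rw [hG j]; rfl
  have hGhat_eq : Ghat = e ⁻¹' strictEpigraph φhat := by rw [hGhat]; rfl
  have hone_mem : e one ∈ strictEpigraph φhat := by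
    simp [hone, e, graphCoords, strictEpigraph, hφhat_zero]
  subst hG_eq hGhat_eq
  refine ⟨e.tamedAt_preimage (tamedAt_strictEpigraph hφhat hconv hone_mem),
    e.isPointedDomain_preimage.mpr (isPointedDomain_strictEpigraph hφhat hone_mem),
    fun ψ hψ => ?_⟩
  have hconv_ψ (K : Set (ℝ × (Fin m → ℂ))) (hK : IsCompact K) :
      TendstoUniformlyOn (fun j => φ (ψ j)) φhat atTop K :=
    fun u hu => hψ.tendsto_atTop.eventually (hconv K hK u hu)
  rw [← kernelSet_strictEpigraph hφhat hconv_ψ hone_mem]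
  exact e.kernelSet_preimage _ one
end

section
/- Let {(G_j, p_j)}_{j≥1} be a sequence of pointed domains in ℂ^n tamed at p̂, and let Ĝ := ker{G_j}_{j≥1} = ⋃_{k≥1}(⋂_{j≥k} G_j)° be its pre-kernel. If p̂ ∈ Ĝ, then the underlying set of the Carathéodory kernel Ker_{p̂}{(G_j, p_j)}_{j≥1} equals Conn_{p̂}(Ĝ), the connected component of the pre-kernel containing p̂. -/
open Filter Topology Set

/-- The pre-kernel of a sequence of sets: `⋃_{k} (⋂_{j ≥ k} G j)°`. -/
def preKernel {E : Type*} [TopologicalSpace E] (G : ℕ → Set E) : Set E :=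
  ⋃ k : ℕ, interior (⋂ j, ⋂ (_ : k ≤ j), G j)

/-- If the base point `phat` of a tamed sequence of pointed domains belongs to the
pre-kernel, then the underlying set of the Carathéodory kernel equals the connected
component of the pre-kernel containing `phat`. -/
theorem kernelSet_eq_connectedComponentIn_preKernel {n : ℕ} (G : ℕ → Set (Fin n → ℂ))
    (p : ℕ → Fin n → ℂ) (phat : Fin n → ℂ)
    (hdom : ∀ j, IsPointedDomain (G j) (p j))
    (htame : TamedAt G p phat)
    (hmem : phat ∈ preKernel G) :
    kernelSet G phat = connectedComponentIn (preKernel G) phat := by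
  classical
  set I : ℕ → Set (Fin n → ℂ) := fun k => interior (⋂ j, ⋂ (_ : k ≤ j), G j) with hI
  have hIopen : ∀ k, IsOpen (I k) := fun k => isOpen_interior
  have hImono : ∀ {k K : ℕ}, k ≤ K → I k ⊆ I K := by
    intro k K hkK
    apply interior_mono
    intro x hx
    simp only [mem_iInter] at hx ⊢
    exact fun j hj => hx j (hkK.trans hj)
  have hIsub : ∀ k, I k ⊆ preKernel G := fun k => subset_iUnion _ k
  set u := kernelSet G phat with hu
  have hu_eq : u = ⋃ k, connectedComponentIn (I k) phat := rfl
  have hu_open : IsOpen u := by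
    rw [hu_eq]
    exact isOpen_iUnion fun k => (hIopen k).connectedComponentIn
  -- key disjointness: any component of some I m meeting u is inside u
  have hkey : ∀ (m : ℕ) (x : Fin n → ℂ), x ∈ I m →
      (connectedComponentIn (I m) x ∩ u).Nonempty → x ∈ u := by
    intro m x hxm ⟨y, hy1, hy2⟩
    rw [hu_eq, mem_iUnion] at hy2
    obtain ⟨k, hyk⟩ := hy2
    have hphatk : phat ∈ I k := connectedComponentIn_nonempty_iff.mp ⟨y, hyk⟩
    set K := max m k
    have h1 : y ∈ connectedComponentIn (I K) x :=
      connectedComponentIn_mono x (hImono (le_max_left m k)) hy1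
    have h2 : y ∈ connectedComponentIn (I K) phat :=
      connectedComponentIn_mono phat (hImono (le_max_right m k)) hyk
    have hxK : x ∈ connectedComponentIn (I K) phat := by
      have hx' : x ∈ connectedComponentIn (I K) x :=
        mem_connectedComponentIn (hImono (le_max_left m k) hxm)
      have heq : connectedComponentIn (I K) phat = connectedComponentIn (I K) x :=
        (connectedComponentIn_eq h2).trans (connectedComponentIn_eq h1).symm
      exact heq ▸ hx'
    rw [hu_eq, mem_iUnion]
    exact ⟨K, hxK⟩
  set v := preKernel G \ u with hv
  have hv_open : IsOpen v := by
    rw [isOpen_iff_mem_nhds]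
    intro x hx
    obtain ⟨hx1, hx2⟩ := hx
    rw [preKernel, mem_iUnion] at hx1
    obtain ⟨m, hxm⟩ := hx1
    have hcomp_open : IsOpen (connectedComponentIn (I m) x) :=
      (hIopen m).connectedComponentIn
    have hmemx : x ∈ connectedComponentIn (I m) x := mem_connectedComponentIn hxm
    apply Filter.mem_of_superset (hcomp_open.mem_nhds hmemx)
    intro z hz
    constructor
    · exact hIsub m (connectedComponentIn_subset _ _ hz)
    · intro hzu
      exact hx2 (hkey m x hxm ⟨z, hz, hzu⟩)
  apply Subset.antisymm
  · rw [hu_eq]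
    exact iUnion_subset fun k => connectedComponentIn_mono phat (hIsub k)
  · have hpre : IsPreconnected (connectedComponentIn (preKernel G) phat) :=
      isPreconnected_connectedComponentIn
    have hsub : connectedComponentIn (preKernel G) phat ⊆ u ∪ v := by
      intro z hz
      by_cases h : z ∈ u
      · exact Or.inl h
      · exact Or.inr ⟨connectedComponentIn_subset _ _ hz, h⟩
    have hdisj : Disjoint u v := by
      rw [Set.disjoint_left]
      intro z hz1 hz2
      exact hz2.2 hz1
    have hphatu : phat ∈ u := by
      rw [preKernel, mem_iUnion] at hmem
      obtain ⟨k, hk⟩ := hmem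
      rw [hu_eq, mem_iUnion]
      exact ⟨k, mem_connectedComponentIn hk⟩
    have hne : (connectedComponentIn (preKernel G) phat ∩ u).Nonempty :=
      ⟨phat, mem_connectedComponentIn hmem, hphatu⟩
    exact hpre.subset_left_of_subset_union hu_open hv_open hdisj hsub hne
end

section
/- Let D ⊆ ℂ^n be a domain, let {ψ_j}_{j≥1} be a sequence of upper semicontinuous functions ψ_j : D → ℝ, and let {p_j}_{j≥1} ⊆ D converge to p̂ ∈ D. Assume each set {z ∈ D : ψ_j(z) < 0} is connected with p_j ∈ {ψ_j < 0}, and that the sequence of pointed domains {({ψ_j < 0}, p_j)}_{j≥1} is tamed at p̂. Define Ψ(z) := inf_{k≥1}(sup_{j≥k} ψ_j)*(z) for z ∈ D, where f* denotes the upper semicontinuous regularization f*(w) := limsup_{ζ→w} f(ζ). If {z ∈ D : Ψ(z) < 0} is connected and contains p̂, and if moreover the interior of {z ∈ D : Ψ(z) ≤ 0} equals {z ∈ D : Ψ(z) < 0}, then the underlying set of the Carathéodory kernel Ker_{p̂}{({ψ_j < 0}, p_j)}_{j≥1} equals {z ∈ D : Ψ(z) < 0}. -/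
open Filter Topology Set

/-- The upper semicontinuous regularization of `f` relative to `D`:
`f*(w) = limsup_{ζ → w, ζ ∈ D} f(ζ)`. -/
noncomputable def uscReg {E : Type*} [TopologicalSpace E] (f : E → ℝ) (D : Set E)
    (w : E) : ℝ :=
  Filter.limsup f (nhdsWithin w D)

/-- `Ψ(z) := inf_{k ≥ 0} (sup_{j ≥ k} ψ j)* (z)`, with the supremum over `j ≥ k`
reindexed as a supremum over `j` of `ψ (k + j)`. -/
noncomputable def PsiFun {E : Type*} [TopologicalSpace E] (ψ : ℕ → E → ℝ) (D : Set E)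
    (z : E) : ℝ :=
  ⨅ k : ℕ, uscReg (fun w => ⨆ j : ℕ, ψ (k + j) w) D z

/-- If `u ≤ 0` eventually along `f`, then `limsup u f ≤ 0` (for real-valued `u`,
including the junk-value conventions). -/
lemma limsup_le_zero_of_eventually_le {α : Type*} {f : Filter α} {u : α → ℝ}
    (h : ∀ᶠ x in f, u x ≤ 0) : Filter.limsup u f ≤ 0 := by
  rw [Filter.limsup_eq]
  by_cases hb : BddBelow {a : ℝ | ∀ᶠ x in f, u x ≤ a}
  · exact csInf_le hb h
  · rw [csInf_of_not_bddBelow hb, Real.sInf_empty]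

/-- If `limsup u f < 0` for a real-valued `u`, then `u` is eventually bounded above by
some negative constant. -/
lemma exists_neg_bound_of_limsup_neg {α : Type*} {f : Filter α} {u : α → ℝ}
    (h : Filter.limsup u f < 0) : ∃ a : ℝ, a < 0 ∧ ∀ᶠ x in f, u x ≤ a := by
  rw [Filter.limsup_eq] at h
  have hne : {a : ℝ | ∀ᶠ x in f, u x ≤ a}.Nonempty := by
    by_contra hne
    rw [Set.not_nonempty_iff_eq_empty] at hne
    rw [hne, Real.sInf_empty] at h
    exact absurd h (lt_irrefl 0)
  obtain ⟨a, ha, halt⟩ := exists_lt_of_csInf_lt hne h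
  exact ⟨a, halt, ha⟩

/-- Computation of the kernel of a tamed sequence of pointed sublevel domains
`{ψ j < 0}`: if `{Ψ < 0}` is connected, contains `phat`, and
`({Ψ ≤ 0})° = {Ψ < 0}`, then the underlying set of the Carathéodory kernel of
`({ψ j < 0}, p j)` equals `{z ∈ D : Ψ(z) < 0}`. -/
theorem kernelSet_of_sublevel {n : ℕ} (D : Set (Fin n → ℂ))
    (hD : IsOpen D ∧ IsConnected D)
    (ψ : ℕ → (Fin n → ℂ) → ℝ)
    (husc : ∀ j, UpperSemicontinuousOn (ψ j) D)
    (p : ℕ → Fin n → ℂ) (hp : ∀ j, p j ∈ D) (phat : Fin n → ℂ) (hphat : phat ∈ D)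
    (hdom : ∀ j, IsPointedDomain {z ∈ D | ψ j z < 0} (p j))
    (htame : TamedAt (fun j => {z ∈ D | ψ j z < 0}) p phat)
    (hPsiConn : IsConnected {z ∈ D | PsiFun ψ D z < 0})
    (hPsiMem : phat ∈ {z ∈ D | PsiFun ψ D z < 0})
    (hPsiInt : interior {z ∈ D | PsiFun ψ D z ≤ 0} = {z ∈ D | PsiFun ψ D z < 0}) :
    kernelSet (fun j => {z ∈ D | ψ j z < 0}) phat = {z ∈ D | PsiFun ψ D z < 0} := by
  classical
  let Ω : Set (Fin n → ℂ) := {z ∈ D | PsiFun ψ D z < 0}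
  let S : ℕ → Set (Fin n → ℂ) := fun k => ⋂ j, ⋂ (_ : k ≤ j), {z ∈ D | ψ j z < 0}
  let I : ℕ → Set (Fin n → ℂ) := fun k => interior (S k)
  let K : Set (Fin n → ℂ) := ⋃ k, connectedComponentIn (I k) phat
  show K = Ω
  -- membership in S k
  have hmemS : ∀ (k : ℕ) (z : Fin n → ℂ), z ∈ S k ↔ ∀ j, k ≤ j → z ∈ D ∧ ψ j z < 0 := by
    intro k z
    simp [S, Set.mem_iInter]
  have hSsubD : ∀ k, S k ⊆ D := fun k z hz => ((hmemS k z).1 hz k le_rfl).1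
  have hSmono : ∀ {k m : ℕ}, k ≤ m → S k ⊆ S m := by
    intro k m hkm z hz
    exact (hmemS m z).2 fun j hj => (hmemS k z).1 hz j (hkm.trans hj)
  have hImono : ∀ {k m : ℕ}, k ≤ m → I k ⊆ I m := fun hkm => interior_mono (hSmono hkm)
  -- Each I k is contained in Ω
  have hIsubΩ : ∀ k, I k ⊆ Ω := by
    intro k
    have h1 : I k ⊆ {z ∈ D | PsiFun ψ D z ≤ 0} := by
      intro z hz
      refine ⟨hSsubD k (interior_subset hz), ?_⟩
      have hA : uscReg (fun w => ⨆ j : ℕ, ψ (k + j) w) D z ≤ 0 := by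
        apply limsup_le_zero_of_eventually_le
        have hIk : I k ∈ nhdsWithin z D :=
          nhdsWithin_le_nhds (isOpen_interior.mem_nhds hz)
        filter_upwards [hIk] with ζ hζ
        refine Real.iSup_le (fun j => ?_) le_rfl
        exact le_of_lt ((hmemS k ζ).1 (interior_subset hζ) (k + j) (Nat.le_add_right k j)).2
      show PsiFun ψ D z ≤ 0
      rw [PsiFun]
      by_cases hb : BddBelow (Set.range fun m => uscReg (fun w => ⨆ j : ℕ, ψ (m + j) w) D z)
      · exact (ciInf_le hb k).trans hA
      · rw [Real.iInf_of_not_bddBelow hb]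
    have h2 : I k ⊆ interior {z ∈ D | PsiFun ψ D z ≤ 0} :=
      interior_maximal h1 isOpen_interior
    rw [hPsiInt] at h2
    exact h2
  -- K ⊆ Ω
  have hKsubΩ : K ⊆ Ω :=
    Set.iUnion_subset fun k => (connectedComponentIn_subset _ _).trans (hIsubΩ k)
  -- Every point of Ω lies in some I k
  have hΩI : ∀ z ∈ Ω, ∃ k, z ∈ I k := by
    intro z hz
    obtain ⟨hzD, hΨ⟩ := hz
    have hΨ' : PsiFun ψ D z < 0 := hΨ
    rw [PsiFun] at hΨ'
    have hex : ∃ k, uscReg (fun w => ⨆ j : ℕ, ψ (k + j) w) D z < 0 := by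
      by_contra hcon
      push_neg at hcon
      have : (0 : ℝ) ≤ ⨅ k : ℕ, uscReg (fun w => ⨆ j : ℕ, ψ (k + j) w) D z :=
        le_ciInf hcon
      linarith
    obtain ⟨k, hk⟩ := hex
    obtain ⟨a, ha0, hev⟩ := exists_neg_bound_of_limsup_neg hk
    obtain ⟨V, hVo, hzV, hVsub⟩ := mem_nhdsWithin.1 hev
    refine ⟨k, mem_interior.2 ⟨V ∩ D, ?_, hVo.inter hD.1, hzV, hzD⟩⟩
    intro ζ hζ
    refine (hmemS k ζ).2 fun j hj => ⟨hζ.2, ?_⟩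
    have hF : (⨆ i : ℕ, ψ (k + i) ζ) ≤ a := hVsub hζ
    have hbA : BddAbove (Set.range fun i : ℕ => ψ (k + i) ζ) := by
      by_contra hb
      rw [Real.iSup_of_not_bddAbove hb] at hF
      linarith
    have hle : ψ (k + (j - k)) ζ ≤ a := (le_ciSup hbA (j - k)).trans hF
    rw [Nat.add_sub_cancel' hj] at hle
    exact lt_of_le_of_lt hle ha0
  -- phat ∈ K
  have hphatK : phat ∈ K := by
    obtain ⟨-, k0, U, hUo, hUp, hUsub⟩ := htame
    have hpI : phat ∈ I k0 := mem_interior.2 ⟨U, hUsub, hUo, hUp⟩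
    exact Set.mem_iUnion.2 ⟨k0, mem_connectedComponentIn hpI⟩
  -- key absorption claim
  have hkey : ∀ (k : ℕ) (z : Fin n → ℂ), z ∈ I k →
      (connectedComponentIn (I k) z ∩ K).Nonempty → connectedComponentIn (I k) z ⊆ K := by
    rintro k z hz ⟨w, hwW, hwK⟩
    obtain ⟨m, hwC⟩ := Set.mem_iUnion.1 hwK
    have h1 : connectedComponentIn (I k) z ⊆ I (max k m) :=
      (connectedComponentIn_subset _ _).trans (hImono (le_max_left k m))
    have hwC' : w ∈ connectedComponentIn (I (max k m)) phat :=
      connectedComponentIn_mono phat (hImono (le_max_right k m)) hwC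
    have h2 : connectedComponentIn (I k) z ⊆ connectedComponentIn (I (max k m)) w :=
      isPreconnected_connectedComponentIn.subset_connectedComponentIn hwW h1
    rw [← connectedComponentIn_eq hwC'] at h2
    exact h2.trans (Set.subset_iUnion (fun k => connectedComponentIn (I k) phat) (max k m))
  -- K is open
  have hKopen : IsOpen K :=
    isOpen_iUnion fun k => isOpen_interior.connectedComponentIn
  -- the complementary open set
  let V : Set (Fin n → ℂ) :=
    ⋃ (z : Fin n → ℂ) (k : ℕ) (_ : z ∈ I k ∧ z ∉ K), connectedComponentIn (I k) z
  have hVopen : IsOpen V :=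
    isOpen_iUnion fun z => isOpen_iUnion fun k => isOpen_iUnion fun _ =>
      isOpen_interior.connectedComponentIn
  have hdisj : Disjoint K V := by
    rw [Set.disjoint_right]
    intro x hxV hxK
    simp only [V, Set.mem_iUnion] at hxV
    obtain ⟨z, k, ⟨hzI, hzK⟩, hx⟩ := hxV
    have := hkey k z hzI ⟨x, hx, hxK⟩
    exact hzK (this (mem_connectedComponentIn hzI))
  have hcover : Ω ⊆ K ∪ V := by
    intro z hz
    by_cases hzK : z ∈ K
    · exact Or.inl hzK
    · obtain ⟨k, hzI⟩ := hΩI z hz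
      refine Or.inr ?_
      simp only [V, Set.mem_iUnion]
      exact ⟨z, k, ⟨hzI, hzK⟩, mem_connectedComponentIn hzI⟩
  have hΩsubK : Ω ⊆ K :=
    hPsiConn.isPreconnected.subset_left_of_subset_union hKopen hVopen hdisj hcover
      ⟨phat, hPsiMem, hphatK⟩
  exact Set.Subset.antisymm hKsubΩ hΩsubK
end

section
/- Let D ⊆ ℂ^n be a domain, {ψ_j}_{j≥1} a sequence of upper semicontinuous functions on D, and {p_j}_{j≥1} ⊆ D with p_j → p̂ ∈ D. Assume each {z ∈ D : ψ_j(z) < 0} is connected with p_j ∈ {ψ_j < 0}, the sequence {({ψ_j < 0}, p_j)}_{j≥1} is tamed at p̂, the set {Ψ < 0} is connected and contains p̂, and the interior of {Ψ ≤ 0} equals {Ψ < 0}, where Ψ(z) := inf_{k≥1}(sup_{j≥k} ψ_j)*(z). If in addition {ψ_j}_{j≥1} converges to Ψ uniformly on compact subsets of D, then the sequence {({ψ_j < 0}, p_j)}_{j≥1} converges in the sense of Carathéodory to ({z ∈ D : Ψ(z) < 0}, p̂); that is, every subsequence has Carathéodory kernel equal to ({Ψ < 0}, p̂). -/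
open Filter Topology Set

/-- If, in addition to the hypotheses for computing the kernel of the sublevel domains
`{ψ j < 0}`, the functions `ψ j` converge to `Ψ` uniformly on compact subsets of `D`, then
the tamed sequence `({ψ j < 0}, p j)` converges in the sense of Carathéodory to
`({Ψ < 0}, phat)`: every subsequence has Carathéodory kernel equal to `({Ψ < 0}, phat)`. -/
theorem caratheodory_convergence_of_sublevel {n : ℕ} (D : Set (Fin n → ℂ))
    (hD : IsOpen D ∧ IsConnected D)
    (ψ : ℕ → (Fin n → ℂ) → ℝ)
    (husc : ∀ j, UpperSemicontinuousOn (ψ j) D)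
    (p : ℕ → Fin n → ℂ) (hp : ∀ j, p j ∈ D) (phat : Fin n → ℂ) (hphat : phat ∈ D)
    (hdom : ∀ j, IsPointedDomain {z ∈ D | ψ j z < 0} (p j))
    (htame : TamedAt (fun j => {z ∈ D | ψ j z < 0}) p phat)
    (hPsiConn : IsConnected {z ∈ D | PsiFun ψ D z < 0})
    (hPsiMem : phat ∈ {z ∈ D | PsiFun ψ D z < 0})
    (hPsiInt : interior {z ∈ D | PsiFun ψ D z ≤ 0} = {z ∈ D | PsiFun ψ D z < 0})
    (hconv : ∀ K : Set (Fin n → ℂ), K ⊆ D → IsCompact K →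
      TendstoUniformlyOn (fun j => ψ j) (PsiFun ψ D) Filter.atTop K) :
    ∀ φ : ℕ → ℕ, StrictMono φ →
      kernelSet (fun k => {z ∈ D | ψ (φ k) z < 0}) phat
        = {z ∈ D | PsiFun ψ D z < 0} := by
  obtain ⟨hDopen, hDconn⟩ := hD
  set Ψ := PsiFun ψ D with hΨdef
  -- pointwise convergence on D
  have hpt : ∀ w ∈ D, Tendsto (fun j => ψ j w) atTop (𝓝 (Ψ w)) := fun w hw =>
    (hconv {w} (Set.singleton_subset_iff.2 hw) isCompact_singleton).tendsto_at rfl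
  -- Ω := {Ψ < 0} is open
  have hΩopen : IsOpen {z ∈ D | Ψ z < 0} := hPsiInt ▸ isOpen_interior
  -- Ψ is upper semicontinuous on D
  have hΨusc : UpperSemicontinuousOn Ψ D := by
    intro x hxD c hc
    obtain ⟨r, rpos, hr⟩ := Metric.isOpen_iff.1 hDopen x hxD
    have hball : Metric.closedBall x (r/2) ⊆ D := fun y hy =>
      hr (lt_of_le_of_lt (Metric.mem_closedBall.1 hy) (by linarith))
    have hBcomp : IsCompact (Metric.closedBall x (r/2)) := isCompact_closedBall x _
    set ε := (c - Ψ x)/3 with hε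
    have εpos : 0 < ε := by simp only [hε]; linarith
    obtain ⟨j, hj⟩ :=
      ((Metric.tendstoUniformlyOn_iff.1 (hconv _ hball hBcomp)) ε εpos).exists
    have hx' : x ∈ Metric.closedBall x (r/2) := Metric.mem_closedBall_self (by linarith)
    have h1 : ψ j x < Ψ x + ε := by
      have := hj x hx'; rw [Real.dist_eq, abs_lt] at this; linarith [this.1]
    have h2 : ∀ᶠ y in 𝓝[D] x, ψ j y < Ψ x + 2*ε :=
      husc j x hxD (Ψ x + 2*ε) (by linarith)
    have h3 : Metric.closedBall x (r/2) ∈ 𝓝[D] x :=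
      mem_nhdsWithin_of_mem_nhds (Metric.closedBall_mem_nhds x (by linarith))
    filter_upwards [h2, h3] with y hy2 hy3
    have h4 := hj y hy3
    rw [Real.dist_eq, abs_lt] at h4
    have h5 : Ψ y < ψ j y + ε := by linarith [h4.2]
    simp only [hε] at *
    linarith
  -- strict sublevel sets of Ψ (intersected with D) are open
  have hUopen : ∀ c : ℝ, IsOpen {x ∈ D | Ψ x < c} := by
    intro c
    rw [isOpen_iff_mem_nhds]
    rintro x ⟨hxD, hx⟩
    have h1 := hΨusc x hxD c hx
    rw [nhdsWithin_eq_nhds.2 (hDopen.mem_nhds hxD)] at h1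
    filter_upwards [h1, hDopen.mem_nhds hxD] with y hy1 hy2 using ⟨hy2, hy1⟩
  intro φ hφ
  ext z
  constructor
  · -- kernel ⊆ {Ψ < 0}
    intro hz
    rw [kernelSet, mem_iUnion] at hz
    obtain ⟨k, hk⟩ := hz
    have hz' := connectedComponentIn_subset _ _ hk
    have hsub : (⋂ j, ⋂ (_ : k ≤ j), {z ∈ D | ψ (φ j) z < 0}) ⊆ {z ∈ D | Ψ z ≤ 0} := by
      intro w hw
      have hwD : w ∈ D := (mem_iInter₂.1 hw k le_rfl).1
      refine ⟨hwD, ?_⟩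
      have htend : Tendsto (fun j => ψ (φ j) w) atTop (𝓝 (Ψ w)) :=
        (hpt w hwD).comp hφ.tendsto_atTop
      refine le_of_tendsto htend ?_
      filter_upwards [eventually_ge_atTop k] with j hj
      exact le_of_lt (mem_iInter₂.1 hw j hj).2
    have := interior_mono hsub hz'
    rwa [hPsiInt] at this
  · -- {Ψ < 0} ⊆ kernel
    intro hz
    -- a path from phat to z inside Ω
    have hΩpc : IsPathConnected {z ∈ D | Ψ z < 0} :=
      (hΩopen.isConnected_iff_isPathConnected).1 hPsiConn
    obtain ⟨γ, hγ⟩ := hΩpc.joinedIn phat hPsiMem z hz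
    set K : Set (Fin n → ℂ) := Set.range γ with hK
    have hKcomp : IsCompact K := isCompact_range γ.continuous
    have hKconn : IsPreconnected K := isPreconnected_range γ.continuous
    have hKΩ : K ⊆ {z ∈ D | Ψ z < 0} := Set.range_subset_iff.2 hγ
    have hphatK : phat ∈ K := ⟨0, γ.source⟩
    have hzK : z ∈ K := ⟨1, γ.target⟩
    -- fatten K inside Ω
    obtain ⟨δ, δpos, hδ⟩ := hKcomp.exists_cthickening_subset_open hΩopen hKΩ
    set K' := Metric.cthickening δ K with hK'
    have hK'comp : IsCompact K' := hKcomp.cthickening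
    have hK'Ω : K' ⊆ {z ∈ D | Ψ z < 0} := hδ
    have hK'D : K' ⊆ D := fun x hx => (hK'Ω hx).1
    -- Ψ is bounded away from 0 on K'
    have hcover : K' ⊆ ⋃ m : ℕ, {x ∈ D | Ψ x < -(1/((m:ℝ)+1))} := by
      intro x hx
      obtain ⟨hxD, hxΨ⟩ := hK'Ω hx
      obtain ⟨m, hm⟩ := exists_nat_one_div_lt (show (0:ℝ) < -Ψ x by linarith)
      exact mem_iUnion.2 ⟨m, hxD, by push_cast at hm ⊢; linarith⟩
    have hmono : ∀ a b : ℕ, a ≤ b →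
        {x ∈ D | Ψ x < -(1/((a:ℝ)+1))} ⊆ {x ∈ D | Ψ x < -(1/((b:ℝ)+1))} := by
      rintro a b hab x ⟨hxD, hx⟩
      refine ⟨hxD, lt_of_lt_of_le hx ?_⟩
      have h1 : (1:ℝ)/((b:ℝ)+1) ≤ 1/((a:ℝ)+1) := by
        apply one_div_le_one_div_of_le (by positivity)
        have : (a:ℝ) ≤ (b:ℝ) := by exact_mod_cast hab
        linarith
      linarith
    have hdir : Directed (· ⊆ ·) (fun m : ℕ => {x ∈ D | Ψ x < -(1/((m:ℝ)+1))}) :=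
      fun a b => ⟨max a b, hmono _ _ (le_max_left _ _), hmono _ _ (le_max_right _ _)⟩
    obtain ⟨m, hm⟩ := hK'comp.elim_directed_cover _ (fun m => hUopen _) hcover hdir
    set ε := 1/((m:ℝ)+1) with hεdef
    have εpos : 0 < ε := by positivity
    obtain ⟨N, hN⟩ := Filter.eventually_atTop.1
      ((Metric.tendstoUniformlyOn_iff.1 (hconv K' hK'D hK'comp)) ε εpos)
    -- the thickening is contained in all sublevel sets of ψ (φ j), j ≥ N
    have hthick : Metric.thickening δ K ⊆
        ⋂ j, ⋂ (_ : N ≤ j), {x ∈ D | ψ (φ j) x < 0} := by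
      intro x hx
      have hxK' : x ∈ K' := Metric.thickening_subset_cthickening δ K hx
      obtain ⟨hxD, hxΨ⟩ := hm hxK'
      refine mem_iInter₂.2 fun j hj => ⟨hxD, ?_⟩
      have hφj : N ≤ φ j := le_trans hj hφ.le_apply
      have := hN (φ j) hφj x hxK'
      rw [Real.dist_eq, abs_lt] at this
      linarith [this.1]
    have hthick' : Metric.thickening δ K ⊆
        interior (⋂ j, ⋂ (_ : N ≤ j), {x ∈ D | ψ (φ j) x < 0}) :=
      interior_maximal hthick Metric.isOpen_thickening
    have hKint : K ⊆ interior (⋂ j, ⋂ (_ : N ≤ j), {x ∈ D | ψ (φ j) x < 0}) :=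
      (Metric.self_subset_thickening δpos K).trans hthick'
    have hcomp := hKconn.subset_connectedComponentIn hphatK hKint
    rw [kernelSet, mem_iUnion]
    exact ⟨N, hcomp hzK⟩
end

section
/- Let G ⊆ ℂ^n be a domain such that the family 𝒪(Δ, G) of holomorphic maps from the open unit disc Δ ⊆ ℂ into G is a normal family (i.e. G is taut). Then for every m ≥ 1 and every domain D ⊆ ℂ^m, the family 𝒪(D, G) of holomorphic maps from D into G is a normal family: every sequence {f_j}_{j≥1} of holomorphic maps f_j : D → G admits either a subsequence converging uniformly on compact subsets of D to a holomorphic map f : D → G, or a subsequence that is compactly divergent on D. -/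
open Filter Topology Set

/-- A sequence of maps `f j : E → F`, viewed as maps from `D` into `G`, is compactly
divergent on `D` if for all compacts `K ⊆ D` and `L ⊆ G`, eventually `f j '' K ∩ L = ∅`. -/
def CompactlyDivergent {E F : Type*} [TopologicalSpace E] [TopologicalSpace F]
    (f : ℕ → E → F) (D : Set E) (G : Set F) : Prop :=
  ∀ K : Set E, K ⊆ D → IsCompact K → ∀ L : Set F, L ⊆ G → IsCompact L →
    ∃ j₀ : ℕ, ∀ j ≥ j₀, Disjoint (f j '' K) L

/-- The family `𝒪(D, G)` of holomorphic maps from `D` into `G` is a normal family: every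
sequence of holomorphic maps `D → G` contains a subsequence converging uniformly on compact
subsets of `D` to a holomorphic map `D → G`, or a compactly divergent subsequence. -/
def IsNormalFamilyO {E F : Type*} [NormedAddCommGroup E] [NormedSpace ℂ E]
    [NormedAddCommGroup F] [NormedSpace ℂ F] (D : Set E) (G : Set F) : Prop :=
  ∀ f : ℕ → E → F, (∀ j, DifferentiableOn ℂ (f j) D ∧ Set.MapsTo (f j) D G) →
    ∃ φ : ℕ → ℕ, StrictMono φ ∧
      ((∃ g : E → F, DifferentiableOn ℂ g D ∧ Set.MapsTo g D G ∧
          ∀ K : Set E, K ⊆ D → IsCompact K →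
            TendstoUniformlyOn (fun k => f (φ k)) g Filter.atTop K) ∨
        CompactlyDivergent (fun k => f (φ k)) D G)

/-!
Tautness gives a uniform estimate: for every compact `L ⊆ G` there is a compact `L' ⊆ G` such
that every holomorphic map from a ball into `G` sending the centre into `L` sends the concentric
ball of half the radius into `L'`. Otherwise a sequence of discs violating the estimate for an
exhaustion of `G` would have neither a convergent nor a compactly divergent subsequence.

Let `K i`, `L i` exhaust `D` and `G`. If for every `i` infinitely many `f j` map `K i` off
`L i`, picking one such `f j` for each `i` gives a compactly divergent subsequence. Otherwise
for some `i` eventually every `f j (K i)` meets `L i`; passing to a limit point of `K i`, a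
subsequence stays in a compact of `G` at one point of `D`. The estimate and the connectedness
of `D` then make it locally bounded in compacts of `G`, the Schwarz lemma makes it
equicontinuous, and Arzelà–Ascoli on a countable dense subset gives a locally uniformly
convergent subsequence; its limit is holomorphic by Cauchy estimates on the derivatives and
stays in `G` because it stays in those compacts.
-/

open Metric

theorem IsOpen.exists_compact_exhaustion {X : Type*} [TopologicalSpace X] [LocallyCompactSpace X]
    [SecondCountableTopology X] {U : Set X} (hU : IsOpen U) :
    ∃ K : ℕ → Set X, Monotone K ∧ (∀ i, IsCompact (K i)) ∧ (∀ i, K i ⊆ U) ∧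
      ∀ C ⊆ U, IsCompact C → ∃ i, C ⊆ K i := by
  have := hU.locallyCompactSpace
  let K := CompactExhaustion.choice U
  refine ⟨fun i => (↑) '' K i, fun i j hij => image_mono (K.subset hij),
    fun i => (K.isCompact i).image continuous_subtype_val, fun i => Subtype.coe_image_subset _ _,
    fun C hCU hC => ?_⟩
  obtain ⟨i, hi⟩ := K.exists_superset_of_isCompact
    (Subtype.isCompact_iff.2 (by rwa [image_preimage_eq_of_subset (by simpa using hCU)]))
  exact ⟨i, fun x hx => ⟨⟨x, hCU hx⟩, hi hx, rfl⟩⟩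

theorem compactlyDivergent_of_exhaustion {E F : Type*} [TopologicalSpace E] [TopologicalSpace F]
    {u : ℕ → E → F} {D : Set E} {G : Set F} {K : ℕ → Set E} {L : ℕ → Set F}
    (hK : Monotone K) (hL : Monotone L) (hKD : ∀ C ⊆ D, IsCompact C → ∃ i, C ⊆ K i)
    (hLG : ∀ C ⊆ G, IsCompact C → ∃ i, C ⊆ L i) (h : ∀ i, Disjoint (u i '' K i) (L i)) :
    CompactlyDivergent u D G := by
  intro C hCD hC C' hC'G hC'
  obtain ⟨i, hi⟩ := hKD C hCD hC
  obtain ⟨i', hi'⟩ := hLG C' hC'G hC'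
  refine ⟨max i i', fun j hj => (h j).mono (image_mono (hi.trans (hK ?_))) (hi'.trans (hL ?_))⟩
  exacts [le_of_max_le_left hj, le_of_max_le_right hj]

theorem TendstoUniformlyOn.exists_isCompact_eventually_mapsTo {ι X F : Type*}
    [TopologicalSpace X] [PseudoMetricSpace F] [ProperSpace F] {u : ι → X → F} {g : X → F}
    {l : Filter ι} {K : Set X} {G : Set F} (hu : TendstoUniformlyOn u g l K) (hK : IsCompact K)
    (hg : ContinuousOn g K) (hgG : MapsTo g K G) (hG : IsOpen G) :
    ∃ L, IsCompact L ∧ L ⊆ G ∧ ∀ᶠ k in l, MapsTo (u k) K L := by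
  have hgK : IsCompact (g '' K) := hK.image_of_continuousOn hg
  obtain ⟨δ, hδ, hδG⟩ := hgK.exists_cthickening_subset_open hG hgG.image_subset
  refine ⟨cthickening δ (g '' K), hgK.cthickening, hδG, ?_⟩
  filter_upwards [Metric.tendstoUniformlyOn_iff.1 hu δ hδ] with k hk x hx
  exact mem_cthickening_of_dist_le _ (g x) δ _ (mem_image_of_mem g hx)
    (dist_comm (g x) _ ▸ hk x hx).le

theorem EquicontinuousAt.cauchySeq_of_mem_closure {X α : Type*} [TopologicalSpace X]
    [PseudoMetricSpace α] {F : ℕ → X → α} {s : Set X} {x : X} (hF : EquicontinuousAt F x)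
    (hx : x ∈ closure s) (hs : ∀ y ∈ s, CauchySeq (F · y)) : CauchySeq (F · x) := by
  rw [Metric.cauchySeq_iff]
  intro ε hε
  obtain ⟨y, hxy, hy⟩ := ((Metric.equicontinuousAt_iff_right.1 hF (ε / 3) (by positivity))
    |>.and_frequently (mem_closure_iff_frequently.1 hx)).exists
  obtain ⟨N, hN⟩ := Metric.cauchySeq_iff.1 (hs y hy) (ε / 3) (by positivity)
  refine ⟨N, fun a ha b hb => ?_⟩
  calc dist (F a x) (F b x)
      ≤ dist (F a x) (F a y) + dist (F a y) (F b y) + dist (F b y) (F b x) := dist_triangle4 ..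
    _ < ε / 3 + ε / 3 + ε / 3 := by
      gcongr
      exacts [hxy a, hN a ha b hb, dist_comm (F b y) _ ▸ hxy b]
    _ = ε := by ring

theorem tendstoLocallyUniformlyOn_of_equicontinuousAt {ι X α : Type*} [TopologicalSpace X]
    [LocallyCompactSpace X] [UniformSpace α] {F : ι → X → α} {f : X → α} {l : Filter ι}
    {D : Set X} (hD : IsOpen D) (hF : ∀ x ∈ D, EquicontinuousAt F x)
    (hf : ∀ x ∈ D, Tendsto (F · x) l (𝓝 (f x))) : TendstoLocallyUniformlyOn F f l D := by
  rw [tendstoLocallyUniformlyOn_iff_forall_isCompact hD]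
  intro K hKD hK
  have := (EquicontinuousOn.tendsto_uniformOnFun_iff_pi' (𝔖 := {K}) (by simpa using hK)
    (by rintro _ rfl x hx; exact (hF x (hKD hx)).equicontinuousWithinAt _) l f).2
    (tendsto_pi_nhds.2 fun x => hf x (hKD (by simpa using x.2)))
  exact UniformOnFun.tendsto_iff_tendstoUniformlyOn.1 this K rfl

section Holomorphic

variable {E F : Type*} [NormedAddCommGroup E] [NormedSpace ℂ E] [NormedAddCommGroup F]
  [NormedSpace ℂ F]

theorem equicontinuousAt_of_differentiableOn_of_isBounded {ι : Type*} {u : ι → E → F} {p : E}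
    {r : ℝ} {L : Set F} (hr : 0 < r) (hL : Bornology.IsBounded L)
    (hd : ∀ i, DifferentiableOn ℂ (u i) (ball p r)) (hu : ∀ i, MapsTo (u i) (ball p r) L) :
    EquicontinuousAt u p := by
  refine equicontinuousAt_of_continuity_modulus (fun x => diam L / r * dist x p) ?_ u ?_
  · simpa using
      ((continuous_id.dist (continuous_const (y := p))).const_mul (diam L / r)).tendsto p
  · filter_upwards [ball_mem_nhds p hr] with x hx i
    rw [dist_comm]
    exact Complex.dist_le_div_mul_dist_of_mapsTo_ball (hd i)
      (fun y hy => mem_closedBall.2 (dist_le_diam_of_mem hL (hu i hy) (hu i (mem_ball_self hr))))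
      hx

theorem exists_tendstoLocallyUniformlyOn_subseq [ProperSpace E] {D : Set E} (hD : IsOpen D)
    {u : ℕ → E → F} (hd : ∀ j, DifferentiableOn ℂ (u j) D)
    (hbd : ∀ p ∈ D, ∃ L, IsCompact L ∧ ∀ᶠ x in 𝓝 p, ∀ j, u j x ∈ L) :
    ∃ ψ : ℕ → ℕ, StrictMono ψ ∧ ∃ g, TendstoLocallyUniformlyOn (fun k => u (ψ k)) g atTop D := by
  choose L hL hev using hbd
  have hequi : ∀ x ∈ D, EquicontinuousAt u x := by
    intro x hx
    obtain ⟨r, hr, hball⟩ :=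
      Metric.eventually_nhds_iff_ball.1 ((hev x hx).and (hD.eventually_mem hx))
    exact equicontinuousAt_of_differentiableOn_of_isBounded hr (hL x hx).isBounded
      (fun j => (hd j).mono fun y hy => (hball y hy).2) fun j y hy => (hball y hy).1 j
  obtain ⟨t, htD, htc, hDt⟩ :=
    (TopologicalSpace.IsSeparable.of_separableSpace D).exists_countable_dense_subset
  have := htc.to_subtype
  obtain ⟨v, -, ψ, hψ, hψt⟩ := (isCompact_univ_pi fun y : t => hL y (htD y.2)).tendsto_subseq
    (x := fun k (y : t) => u k y) fun k y _ => (hev y (htD y.2)).self_of_nhds k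
  have hlim : ∀ x ∈ D, ∃ a, Tendsto (fun k => u (ψ k) x) atTop (𝓝 a) := by
    intro x hx
    have hcauchy : CauchySeq (fun k => u (ψ k) x) :=
      ((hequi x hx).comp ψ).cauchySeq_of_mem_closure (hDt hx) fun y hy =>
        (tendsto_pi_nhds.1 hψt ⟨y, hy⟩).cauchySeq
    obtain ⟨a, -, ha⟩ := cauchySeq_tendsto_of_isComplete (hL x hx).isComplete
      (fun k => (hev x hx).self_of_nhds (ψ k)) hcauchy
    exact ⟨a, ha⟩
  choose! g hg using hlim
  exact ⟨ψ, hψ, g, tendstoLocallyUniformlyOn_of_equicontinuousAt hD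
    (fun x hx => (hequi x hx).comp ψ) hg⟩

theorem uniformCauchySeqOn_fderiv_ball {u : ℕ → E → F} {p : E} {ρ : ℝ} (hρ : 0 < ρ)
    (hd : ∀ k, DifferentiableOn ℂ (u k) (ball p (2 * ρ)))
    (hu : UniformCauchySeqOn u atTop (ball p (2 * ρ))) :
    UniformCauchySeqOn (fun k => fderiv ℂ (u k)) atTop (ball p ρ) := by
  rw [Metric.uniformCauchySeqOn_iff] at hu ⊢
  intro ε hε
  obtain ⟨N, hN⟩ := hu (ρ * ε / 4) (by positivity)
  refine ⟨N, fun a ha b hb q hq => ?_⟩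
  have hball : ball q ρ ⊆ ball p (2 * ρ) := ball_subset_ball' (by linarith [mem_ball.1 hq])
  have hq' : q ∈ ball p (2 * ρ) := hball (mem_ball_self hρ)
  have hmaps : MapsTo (u a - u b) (ball q ρ) (closedBall ((u a - u b) q) (ρ * ε / 2)) := by
    intro x hx
    rw [mem_closedBall, dist_eq_norm]
    calc ‖(u a - u b) x - (u a - u b) q‖ ≤ ‖u a x - u b x‖ + ‖u a q - u b q‖ := norm_sub_le _ _
      _ ≤ ρ * ε / 4 + ρ * ε / 4 := by
        rw [← dist_eq_norm, ← dist_eq_norm]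
        exact add_le_add (hN a ha b hb x (hball hx)).le (hN a ha b hb q hq').le
      _ = ρ * ε / 2 := by ring
  have hdiff : ∀ k, DifferentiableAt ℂ (u k) q := fun k =>
    (hd k).differentiableAt (isOpen_ball.mem_nhds hq')
  rw [dist_eq_norm, ← fderiv_sub (hdiff a) (hdiff b)]
  calc ‖fderiv ℂ (u a - u b) q‖ ≤ ρ * ε / 2 / ρ :=
        Complex.norm_fderiv_le_div_of_mapsTo_ball (((hd a).sub (hd b)).mono hball) hmaps hρ
    _ < ε := by rw [mul_div_assoc, mul_div_cancel_left₀ _ hρ.ne']; linarith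

theorem TendstoLocallyUniformlyOn.complex_differentiableOn [ProperSpace E] [CompleteSpace F]
    {D : Set E} (hD : IsOpen D) {u : ℕ → E → F} {g : E → F}
    (hu : TendstoLocallyUniformlyOn u g atTop D) (hd : ∀ k, DifferentiableOn ℂ (u k) D) :
    DifferentiableOn ℂ g D := by
  intro p hp
  obtain ⟨ε, hε, hεD⟩ := Metric.isOpen_iff.1 hD p hp
  have hsub : closedBall p (2 * (ε / 4)) ⊆ D :=
    (closedBall_subset_ball (by linarith)).trans hεD
  have hfderiv := uniformCauchySeqOn_fderiv_ball (by positivity)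
    (fun k => (hd k).mono (ball_subset_closedBall.trans hsub))
    (((tendstoLocallyUniformlyOn_iff_forall_isCompact hD).1 hu _ hsub
      (isCompact_closedBall _ _)).uniformCauchySeqOn.mono ball_subset_closedBall)
  have hsub' : ball p (ε / 4) ⊆ D := (ball_subset_ball (by linarith)).trans hεD
  have hlim : ∀ x ∈ ball p (ε / 4), Tendsto (fun k => fderiv ℂ (u k) x) atTop
      (𝓝 (limUnder atTop fun k => fderiv ℂ (u k) x)) := fun x hx =>
    (hfderiv.cauchySeq hx).tendsto_limUnder
  exact (hasFDerivAt_of_tendstoUniformlyOn isOpen_ball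
    (hfderiv.tendstoUniformlyOn_of_tendsto hlim)
    (fun k x hx => ((hd k).differentiableAt (hD.mem_nhds (hsub' hx))).hasFDerivAt)
    (fun x hx => hu.tendsto_at (hsub' hx)) (mem_ball_self (by positivity))).differentiableAt
    |>.differentiableWithinAt

end Holomorphic

section Taut

variable {E F : Type*} [NormedAddCommGroup E] [NormedSpace ℂ E] [NormedAddCommGroup F]
  [NormedSpace ℂ F] [ProperSpace F] {G : Set F}

theorem IsNormalFamilyO.exists_isCompact_mapsTo_closedBall_half
    (htaut : IsNormalFamilyO (ball (0 : ℂ) 1) G) (hG : IsOpen G) {L : Set F} (hL : IsCompact L)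
    (hLG : L ⊆ G) :
    ∃ L', IsCompact L' ∧ L' ⊆ G ∧ ∀ h : ℂ → F, DifferentiableOn ℂ h (ball 0 1) →
      MapsTo h (ball 0 1) G → h 0 ∈ L → MapsTo h (closedBall 0 (1 / 2)) L' := by
  obtain ⟨K, hKmono, hK, hKG, hKabs⟩ := hG.exists_compact_exhaustion
  by_contra! hcon
  choose h hd hmaps h0 hnot using fun k =>
    hcon (K k ∪ L) ((hK k).union hL) (union_subset (hKG k) hLG)
  obtain ⟨φ, hφ, ⟨g, hgd, hgG, hgu⟩ | hdiv⟩ := htaut h fun k => ⟨hd k, hmaps k⟩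
  · have hsub : closedBall (0 : ℂ) (1 / 2) ⊆ ball 0 1 := closedBall_subset_ball (by norm_num)
    obtain ⟨L', hL', hL'G, hev⟩ :=
      (hgu _ hsub (isCompact_closedBall 0 _)).exists_isCompact_eventually_mapsTo
        (isCompact_closedBall 0 _) (hgd.continuousOn.mono hsub) (hgG.mono_left hsub) hG
    obtain ⟨i, hi⟩ := hKabs L' hL'G hL'
    obtain ⟨k, hk, hik⟩ := (hev.and (hφ.tendsto_atTop.eventually_ge_atTop i)).exists
    exact hnot (φ k) fun z hz => Or.inl (hKmono hik (hi (hk hz)))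
  · obtain ⟨j, hj⟩ := hdiv {0} (by simp) isCompact_singleton L hLG hL
    exact (hj j le_rfl).ne_of_mem (mem_image_of_mem _ rfl) (h0 (φ j)) rfl

theorem IsNormalFamilyO.exists_isCompact_forall_mapsTo_closedBall
    (htaut : IsNormalFamilyO (ball (0 : ℂ) 1) G) (hG : IsOpen G) {L : Set F} (hL : IsCompact L)
    (hLG : L ⊆ G) :
    ∃ L', IsCompact L' ∧ L' ⊆ G ∧ ∀ (f : E → F) (p : E) (R : ℝ), 0 < R →
      DifferentiableOn ℂ f (ball p R) → MapsTo f (ball p R) G → f p ∈ L →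
      MapsTo f (closedBall p (R / 2)) L' := by
  obtain ⟨L', hL', hL'G, hdisc⟩ := htaut.exists_isCompact_mapsTo_closedBall_half hG hL hLG
  refine ⟨L', hL', hL'G, fun f p R hR hd hmaps hp q hq => ?_⟩
  set A : ℂ → E := fun z => p + z • ((2 : ℂ) • (q - p))
  have hA : MapsTo A (ball 0 1) (ball p R) := by
    intro z hz
    rw [mem_ball_zero_iff] at hz
    rw [mem_closedBall, dist_eq_norm] at hq
    rw [mem_ball, dist_eq_norm, add_sub_cancel_left, norm_smul, norm_smul]
    calc ‖z‖ * (‖(2 : ℂ)‖ * ‖q - p‖) ≤ ‖z‖ * R := by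
          gcongr; norm_num; linarith
      _ < R := by nlinarith
  have hAq : A (1 / 2) = q := by simp [A, smul_smul]
  rw [← hAq]
  exact hdisc (f ∘ A) (hd.comp (by fun_prop) hA) (hmaps.comp hA) (by simpa [A] using hp)
    (by norm_num)

theorem IsNormalFamilyO.exists_frequently_mem_isCompact
    (htaut : IsNormalFamilyO (ball (0 : ℂ) 1) G) (hG : IsOpen G) {D : Set E} (hD : IsOpen D)
    {u : ℕ → E → F} (hd : ∀ j, DifferentiableOn ℂ (u j) D) (hmaps : ∀ j, MapsTo (u j) D G)
    {K : Set E} (hK : IsCompact K) (hKD : K ⊆ D) {L : Set F} (hL : IsCompact L) (hLG : L ⊆ G)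
    (h : ∃ᶠ j in atTop, ¬Disjoint (u j '' K) L) :
    ∃ x₀ ∈ D, ∃ L', IsCompact L' ∧ L' ⊆ G ∧ ∃ᶠ j in atTop, u j x₀ ∈ L' := by
  obtain ⟨φ, hφ, hφKL⟩ := extraction_of_frequently_atTop h
  have hmeet : ∀ k, ∃ x ∈ K, u (φ k) x ∈ L := fun k => by
    obtain ⟨_, ⟨x, hx, rfl⟩, hxL⟩ := not_disjoint_iff.1 (hφKL k)
    exact ⟨x, hx, hxL⟩
  choose x hxK hxL using hmeet
  obtain ⟨x₀, hx₀K, ψ, hψ, hxψ⟩ := hK.tendsto_subseq hxK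
  obtain ⟨δ, hδ, hδD⟩ := Metric.isOpen_iff.1 hD x₀ (hKD hx₀K)
  obtain ⟨L', hL', hL'G, hhalf⟩ :=
    htaut.exists_isCompact_forall_mapsTo_closedBall (E := E) hG hL hLG
  refine ⟨x₀, hKD hx₀K, L', hL', hL'G,
    (hφ.comp hψ).tendsto_atTop.frequently (Eventually.frequently ?_)⟩
  filter_upwards [hxψ (ball_mem_nhds x₀ (by positivity : 0 < δ / 2 / 2))] with k
    (hk : x (ψ k) ∈ ball x₀ (δ / 2 / 2))
  have hball : ball (x (ψ k)) (δ / 2) ⊆ D :=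
    (ball_subset_ball' (by linarith [mem_ball.1 hk])).trans hδD
  exact hhalf _ _ _ (by positivity) ((hd _).mono hball) ((hmaps _).mono_left hball) (hxL _)
    (mem_closedBall_comm.1 (ball_subset_closedBall hk))

theorem IsNormalFamilyO.exists_isCompact_eventually_mem
    (htaut : IsNormalFamilyO (ball (0 : ℂ) 1) G) (hG : IsOpen G) {D : Set E} (hD : IsOpen D)
    (hDconn : IsPreconnected D) {u : ℕ → E → F} (hd : ∀ j, DifferentiableOn ℂ (u j) D)
    (hmaps : ∀ j, MapsTo (u j) D G) {x₀ : E} (hx₀ : x₀ ∈ D) {L₀ : Set F} (hL₀ : IsCompact L₀)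
    (hL₀G : L₀ ⊆ G) (hux₀ : ∀ j, u j x₀ ∈ L₀) :
    ∀ p ∈ D, ∃ L, IsCompact L ∧ L ⊆ G ∧ ∀ᶠ x in 𝓝 p, ∀ j, u j x ∈ L := by
  have near : ∀ p ∈ D, ∃ ε > 0, ∀ q ∈ ball p ε, ∀ L, IsCompact L → L ⊆ G → (∀ j, u j q ∈ L) →
      ∃ L', IsCompact L' ∧ L' ⊆ G ∧ ∀ᶠ x in 𝓝 p, ∀ j, u j x ∈ L' := by
    intro p hp
    obtain ⟨ε, hε, hεD⟩ := Metric.isOpen_iff.1 hD p hp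
    refine ⟨ε / 3, by positivity, fun q hq L hL hLG hqL => ?_⟩
    obtain ⟨L', hL', hL'G, hhalf⟩ :=
      htaut.exists_isCompact_forall_mapsTo_closedBall (E := E) hG hL hLG
    have hball : ball q (2 * (ε / 3)) ⊆ D :=
      (ball_subset_ball' (by linarith [mem_ball.1 hq])).trans hεD
    refine ⟨L', hL', hL'G, ?_⟩
    filter_upwards [isOpen_ball.mem_nhds (mem_ball_comm.1 hq)] with x hx j
    exact hhalf _ q _ (by positivity) ((hd j).mono hball) ((hmaps j).mono_left hball) (hqL j)
      (by simpa using ball_subset_closedBall hx)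
  refine hDconn.subset_of_closure_inter_subset (u := {p | ∃ L, IsCompact L ∧ L ⊆ G ∧
    ∀ᶠ x in 𝓝 p, ∀ j, u j x ∈ L}) ?_ ?_ ?_
  · exact isOpen_iff_mem_nhds.2 fun p ⟨L, hL, hLG, hev⟩ =>
      hev.eventually_nhds.mono fun y hy => ⟨L, hL, hLG, hy⟩
  · obtain ⟨ε, hε, hnear⟩ := near x₀ hx₀
    exact ⟨x₀, hx₀, hnear x₀ (mem_ball_self hε) L₀ hL₀ hL₀G hux₀⟩
  · rintro p ⟨hpU, hpD⟩
    obtain ⟨ε, hε, hnear⟩ := near p hpD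
    obtain ⟨q, ⟨L, hL, hLG, hev⟩, hpq⟩ := Metric.mem_closure_iff.1 hpU ε hε
    exact hnear q (mem_ball'.2 hpq) L hL hLG hev.self_of_nhds

end Taut

theorem normal_family_of_taut_general {n : ℕ} (G : Set (Fin n → ℂ))
    (hGopen : IsOpen G)
    (htaut : IsNormalFamilyO (Metric.ball (0 : ℂ) 1) G) :
    ∀ m : ℕ, 1 ≤ m → ∀ D : Set (Fin m → ℂ), IsOpen D → IsConnected D →
      IsNormalFamilyO D G := by
  intro m _ D hD hDconn f hf
  choose hfd hfG using hf
  obtain ⟨K, hKmono, hK, hKD, hKabs⟩ := hD.exists_compact_exhaustion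
  obtain ⟨L, hLmono, hL, hLG, hLabs⟩ := hGopen.exists_compact_exhaustion
  by_cases hdiv : ∀ i, ∃ᶠ j in atTop, Disjoint (f j '' K i) (L i)
  · obtain ⟨φ, hφ, hφKL⟩ := extraction_forall_of_frequently hdiv
    exact ⟨φ, hφ, Or.inr (compactlyDivergent_of_exhaustion hKmono hLmono hKabs hLabs hφKL)⟩
  obtain ⟨i, hi⟩ := not_forall.1 hdiv
  obtain ⟨x₀, hx₀, L₀, hL₀, hL₀G, hfreq⟩ := htaut.exists_frequently_mem_isCompact hGopen hD hfd
    hfG (hK i) (hKD i) (hL i) (hLG i) (not_frequently.1 hi).frequently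
  obtain ⟨φ, hφ, hφx₀⟩ := extraction_of_frequently_atTop hfreq
  have hbd := htaut.exists_isCompact_eventually_mem hGopen hD hDconn.isPreconnected
    (fun j => hfd (φ j)) (fun j => hfG (φ j)) hx₀ hL₀ hL₀G hφx₀
  obtain ⟨ψ, hψ, g, hg⟩ := exists_tendstoLocallyUniformlyOn_subseq hD (fun j => hfd (φ j))
    fun p hp => (hbd p hp).imp fun _ hL => ⟨hL.1, hL.2.2⟩
  refine ⟨φ ∘ ψ, hφ.comp hψ, Or.inl ⟨g, hg.complex_differentiableOn hD fun k => hfd _,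
    fun x hx => ?_, (tendstoLocallyUniformlyOn_iff_forall_isCompact hD).1 hg⟩⟩
  obtain ⟨Lx, hLx, hLxG, hev⟩ := hbd x hx
  exact hLxG (hLx.isClosed.mem_of_tendsto (hg.tendsto_at hx)
    (Eventually.of_forall fun k => hev.self_of_nhds (ψ k)))

/-- If a domain `G ⊆ ℂ^n` is taut, i.e. `𝒪(Δ, G)` is a normal family where `Δ ⊆ ℂ` is the
open unit disc, then for every `m ≥ 1` and every domain `D ⊆ ℂ^m`, the family `𝒪(D, G)` is
a normal family. -/
theorem normal_family_of_taut {n : ℕ} (G : Set (Fin n → ℂ))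
    (hGopen : IsOpen G) (hGconn : IsConnected G)
    (htaut : IsNormalFamilyO (Metric.ball (0 : ℂ) 1) G) :
    ∀ m : ℕ, 1 ≤ m → ∀ D : Set (Fin m → ℂ), IsOpen D → IsConnected D →
      IsNormalFamilyO D G :=
  normal_family_of_taut_general G hGopen htaut
end
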